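/- The ideal 3·O_K of the maximal order O_K of K = ℚ(√−3, √−5), viewed as a fractional ideal of the order O = ℤ[ξ, λ], is not invertible. -/
import Mathlib

noncomputable def xi : ℂ := (1 + Complex.I * (Real.sqrt 3 : ℂ)) / 2
noncomputable def lam : ℂ := 4 + (Real.sqrt 15 : ℂ)
/-- The ring O = ℤ[ξ, λ], as a subalgebra of ℂ over ℤ. -/
noncomputable def OA : Subalgebra ℤ ℂ := Algebra.adjoin ℤ ({xi, lam} : Set ℂ)
/-- K = ℚ(√−3, √−5). -/
noncomputable def Kfield : IntermediateField ℚ ℂ :=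
  IntermediateField.adjoin ℚ
    ({Complex.I * (Real.sqrt 3 : ℂ), Complex.I * (Real.sqrt 5 : ℂ)} : Set ℂ)
/-- The fractional O-ideal 3·O_K, where O_K = {x ∈ K : x integral over ℤ}
is the maximal order of K. -/
noncomputable def threeOK : Submodule OA ℂ :=
  Submodule.span OA {z : ℂ | ∃ x : ℂ, x ∈ Kfield ∧ IsIntegral ℤ x ∧ z = 3 * x}

set_option linter.unnecessarySeqFocus false

lemma hs3 : ((Real.sqrt 3 : ℝ) : ℂ)^2 = 3 := by
  norm_cast; rw [Real.sq_sqrt] <;> norm_num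

lemma hs5 : ((Real.sqrt 5 : ℝ) : ℂ)^2 = 5 := by
  norm_cast; rw [Real.sq_sqrt] <;> norm_num

lemma hs15 : ((Real.sqrt 15 : ℝ) : ℂ)^2 = 15 := by
  norm_cast; rw [Real.sq_sqrt] <;> norm_num

lemma hs35 : ((Real.sqrt 3 : ℝ) : ℂ) * ((Real.sqrt 5 : ℝ) : ℂ) = ((Real.sqrt 15 : ℝ) : ℂ) := by
  norm_cast; rw [← Real.sqrt_mul (by norm_num : (0:ℝ) ≤ 3)]; norm_num

lemma hxi2 : xi^2 = xi - 1 := by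
  unfold xi
  linear_combination (((Real.sqrt 3 : ℝ):ℂ)^2/4) * Complex.I_sq - (1/4) * hs3

lemma hlam2 : lam^2 = 8*lam - 1 := by
  unfold lam
  linear_combination hs15

noncomputable def theta : ℂ := (((Real.sqrt 15 : ℝ):ℂ) + Complex.I * ((Real.sqrt 5 : ℝ):ℂ))/2

lemma htheta2 : theta^2 = 5 * xi := by
  unfold theta xi
  linear_combination (1/4)*hs15 + ((((Real.sqrt 5:ℝ):ℂ))^2/4)*Complex.I_sq
    + ((2*Complex.I*((Real.sqrt 3:ℝ):ℂ)-1)/4)*hs5 - (Complex.I*((Real.sqrt 5:ℝ):ℂ)/2)*hs35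

lemma htheta4 : theta^4 = 25*xi - 25 := by
  linear_combination (theta^2 + 5*xi)*htheta2 + 25*hxi2

lemma theta_integral : IsIntegral ℤ theta := by
  refine ⟨Polynomial.X^4 - Polynomial.C 5 * Polynomial.X^2 + Polynomial.C 25, ?_, ?_⟩
  · monicity!
  · have : Polynomial.eval₂ (algebraMap ℤ ℂ)  theta
        (Polynomial.X^4 - Polynomial.C 5 * Polynomial.X^2 + Polynomial.C 25)
        = theta^4 - 5*theta^2 + 25 := by
      simp [Polynomial.eval₂_add, Polynomial.eval₂_sub, Polynomial.eval₂_mul,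
        Polynomial.eval₂_pow]
    rw [this]
    linear_combination htheta4 - 5*htheta2

lemma theta_mem_K : theta ∈ Kfield := by
  have h3 : Complex.I * ((Real.sqrt 3:ℝ):ℂ) ∈ Kfield :=
    IntermediateField.subset_adjoin _ _ (by simp)
  have h5 : Complex.I * ((Real.sqrt 5:ℝ):ℂ) ∈ Kfield :=
    IntermediateField.subset_adjoin _ _ (by simp)
  have h15 : ((Real.sqrt 15:ℝ):ℂ) ∈ Kfield := by
    have e : ((Real.sqrt 15:ℝ):ℂ)
        = -((Complex.I * ((Real.sqrt 3:ℝ):ℂ)) * (Complex.I * ((Real.sqrt 5:ℝ):ℂ))) := by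
      linear_combination (((Real.sqrt 3:ℝ):ℂ)*((Real.sqrt 5:ℝ):ℂ))*Complex.I_sq - hs35
    rw [e]
    exact neg_mem (mul_mem h3 h5)
  have h2K : (2:ℂ) ∈ Kfield := by
    simpa using Kfield.algebraMap_mem (2:ℚ)
  exact Kfield.div_mem (add_mem h15 h5) h2K

/-- The ℤ-module spanned by the basis of O. -/
noncomputable def M : Submodule ℤ ℂ := Submodule.span ℤ ({1, xi, lam, lam*xi} : Set ℂ)

lemma comb_mem (a b c d : ℤ) : ((a:ℂ) + (b:ℂ)*xi + (c:ℂ)*lam + (d:ℂ)*(lam*xi)) ∈ M := by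
  have m1 : (1:ℂ) ∈ M := Submodule.subset_span (by simp)
  have m2 : xi ∈ M := Submodule.subset_span (by simp)
  have m3 : lam ∈ M := Submodule.subset_span (by simp)
  have m4 : lam*xi ∈ M := Submodule.subset_span (by simp)
  refine add_mem (add_mem (add_mem ?_ ?_) ?_) ?_
  · simpa using M.smul_mem a m1
  · simpa [zsmul_eq_mul] using M.smul_mem b m2
  · simpa [zsmul_eq_mul] using M.smul_mem c m3
  · simpa [zsmul_eq_mul] using M.smul_mem d m4

lemma key_mul : ∀ x ∈ ({1, xi, lam, lam*xi} : Set ℂ), ∀ y ∈ ({1, xi, lam, lam*xi} : Set ℂ),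
    x * y ∈ M := by
  intro x hx y hy
  simp only [Set.mem_insert_iff, Set.mem_singleton_iff] at hx hy
  rcases hx with rfl|rfl|rfl|rfl <;> rcases hy with rfl|rfl|rfl|rfl
  · rw [show (1:ℂ)*1 = ((1:ℤ):ℂ) + ((0:ℤ):ℂ)*xi + ((0:ℤ):ℂ)*lam + ((0:ℤ):ℂ)*(lam*xi) by push_cast; ring]
    exact comb_mem 1 0 0 0
  · rw [show (1:ℂ)*xi = ((0:ℤ):ℂ) + ((1:ℤ):ℂ)*xi + ((0:ℤ):ℂ)*lam + ((0:ℤ):ℂ)*(lam*xi) by push_cast; ring]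
    exact comb_mem 0 1 0 0
  · rw [show (1:ℂ)*lam = ((0:ℤ):ℂ) + ((0:ℤ):ℂ)*xi + ((1:ℤ):ℂ)*lam + ((0:ℤ):ℂ)*(lam*xi) by push_cast; ring]
    exact comb_mem 0 0 1 0
  · rw [show (1:ℂ)*(lam*xi) = ((0:ℤ):ℂ) + ((0:ℤ):ℂ)*xi + ((0:ℤ):ℂ)*lam + ((1:ℤ):ℂ)*(lam*xi) by push_cast; ring]
    exact comb_mem 0 0 0 1
  · rw [show xi*1 = ((0:ℤ):ℂ) + ((1:ℤ):ℂ)*xi + ((0:ℤ):ℂ)*lam + ((0:ℤ):ℂ)*(lam*xi) by push_cast; ring]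
    exact comb_mem 0 1 0 0
  · rw [show xi*xi = ((-1:ℤ):ℂ) + ((1:ℤ):ℂ)*xi + ((0:ℤ):ℂ)*lam + ((0:ℤ):ℂ)*(lam*xi) by push_cast; linear_combination hxi2]
    exact comb_mem (-1) 1 0 0
  · rw [show xi*lam = ((0:ℤ):ℂ) + ((0:ℤ):ℂ)*xi + ((0:ℤ):ℂ)*lam + ((1:ℤ):ℂ)*(lam*xi) by push_cast; ring]
    exact comb_mem 0 0 0 1
  · rw [show xi*(lam*xi) = ((0:ℤ):ℂ) + ((0:ℤ):ℂ)*xi + ((-1:ℤ):ℂ)*lam + ((1:ℤ):ℂ)*(lam*xi) by push_cast; linear_combination lam*hxi2]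
    exact comb_mem 0 0 (-1) 1
  · rw [show lam*1 = ((0:ℤ):ℂ) + ((0:ℤ):ℂ)*xi + ((1:ℤ):ℂ)*lam + ((0:ℤ):ℂ)*(lam*xi) by push_cast; ring]
    exact comb_mem 0 0 1 0
  · rw [show lam*xi = ((0:ℤ):ℂ) + ((0:ℤ):ℂ)*xi + ((0:ℤ):ℂ)*lam + ((1:ℤ):ℂ)*(lam*xi) by push_cast; ring]
    exact comb_mem 0 0 0 1
  · rw [show lam*lam = ((-1:ℤ):ℂ) + ((0:ℤ):ℂ)*xi + ((8:ℤ):ℂ)*lam + ((0:ℤ):ℂ)*(lam*xi) by push_cast; linear_combination hlam2]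
    exact comb_mem (-1) 0 8 0
  · rw [show lam*(lam*xi) = ((0:ℤ):ℂ) + ((-1:ℤ):ℂ)*xi + ((0:ℤ):ℂ)*lam + ((8:ℤ):ℂ)*(lam*xi) by push_cast; linear_combination xi*hlam2]
    exact comb_mem 0 (-1) 0 8
  · rw [show lam*xi*1 = ((0:ℤ):ℂ) + ((0:ℤ):ℂ)*xi + ((0:ℤ):ℂ)*lam + ((1:ℤ):ℂ)*(lam*xi) by push_cast; ring]
    exact comb_mem 0 0 0 1
  · rw [show lam*xi*xi = ((0:ℤ):ℂ) + ((0:ℤ):ℂ)*xi + ((-1:ℤ):ℂ)*lam + ((1:ℤ):ℂ)*(lam*xi) by push_cast; linear_combination lam*hxi2]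
    exact comb_mem 0 0 (-1) 1
  · rw [show lam*xi*lam = ((0:ℤ):ℂ) + ((-1:ℤ):ℂ)*xi + ((0:ℤ):ℂ)*lam + ((8:ℤ):ℂ)*(lam*xi) by push_cast; linear_combination xi*hlam2]
    exact comb_mem 0 (-1) 0 8
  · rw [show lam*xi*(lam*xi) = ((1:ℤ):ℂ) + ((-1:ℤ):ℂ)*xi + ((-8:ℤ):ℂ)*lam + ((8:ℤ):ℂ)*(lam*xi) by push_cast; linear_combination xi^2*hlam2 + (8*lam-1)*hxi2]
    exact comb_mem 1 (-1) (-8) 8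

lemma M_mul : ∀ x ∈ M, ∀ y ∈ M, x * y ∈ M := by
  have stage1 : ∀ x ∈ ({1, xi, lam, lam*xi} : Set ℂ), ∀ y ∈ M, x * y ∈ M := by
    intro x hx y hy
    induction hy using Submodule.span_induction with
    | mem w hw => exact key_mul x hx w hw
    | zero => rw [mul_zero]; exact zero_mem _
    | add u v _ _ hu hv => rw [mul_add]; exact add_mem hu hv
    | smul a u _ hu => rw [mul_smul_comm]; exact M.smul_mem a hu
  intro x hx y hy
  induction hx using Submodule.span_induction with
  | mem w hw => exact stage1 w hw y hy
  | zero => rw [zero_mul]; exact zero_mem _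
  | add u v _ _ hu hv => rw [add_mul]; exact add_mem hu hv
  | smul a u _ hu => rw [smul_mul_assoc]; exact M.smul_mem a hu

lemma OA_le_M : ∀ x ∈ OA, x ∈ M := by
  intro x hx
  have hx' : x ∈ Algebra.adjoin ℤ ({xi, lam} : Set ℂ) := hx
  clear hx
  induction hx' using Algebra.adjoin_induction with
  | mem z hz =>
    rcases hz with rfl|rfl
    · exact Submodule.subset_span (by simp)
    · exact Submodule.subset_span (by simp)
  | algebraMap r => simpa using comb_mem r 0 0 0
  | add u v _ _ hu hv => exact add_mem hu hv
  | mul u v _ _ hu hv => exact M_mul u hu v hv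

lemma sqrt15_mul_sqrt3 : Real.sqrt 15 * Real.sqrt 3 = 3 * Real.sqrt 5 := by
  rw [← Real.sqrt_mul (by norm_num : (0:ℝ) ≤ 15)]
  rw [show (15:ℝ)*3 = 3^2*5 by norm_num, Real.sqrt_mul (by positivity), Real.sqrt_sq (by norm_num)]

lemma theta_not_mem_M : theta ∉ M := by
  intro hm
  unfold M at hm
  obtain ⟨a, z1, hz1, hx1⟩ := Submodule.mem_span_insert.mp hm
  obtain ⟨b, z2, hz2, hx2⟩ := Submodule.mem_span_insert.mp hz1
  obtain ⟨c, z3, hz3, hx3⟩ := Submodule.mem_span_insert.mp hz2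
  obtain ⟨d, hx4⟩ := Submodule.mem_span_singleton.mp hz3
  have heq : theta = (a:ℂ) + (b:ℂ)*xi + (c:ℂ)*lam + (d:ℂ)*(lam*xi) := by
    rw [hx1, hx2, hx3, ← hx4]
    push_cast [zsmul_eq_mul]
    ring
  have heq2 : ((Real.sqrt 15:ℝ):ℂ) + Complex.I*((Real.sqrt 5:ℝ):ℂ)
      = 2*(a:ℂ) + (b:ℂ)*(1 + Complex.I*((Real.sqrt 3:ℝ):ℂ))
        + 2*(c:ℂ)*(4 + ((Real.sqrt 15:ℝ):ℂ))
        + (d:ℂ)*((4 + ((Real.sqrt 15:ℝ):ℂ))*(1 + Complex.I*((Real.sqrt 3:ℝ):ℂ))) := by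
    have h := heq
    unfold theta xi lam at h
    linear_combination 2*h
  have him := congrArg Complex.im heq2
  simp [Complex.add_im, Complex.mul_im, Complex.mul_re, Complex.add_re] at him
  have hkey : (1 - 3*(d:ℝ)) * Real.sqrt 5 = ((b:ℝ) + 4*(d:ℝ)) * Real.sqrt 3 := by
    linear_combination him + (d:ℝ)*sqrt15_mul_sqrt3
  have h5 := Real.sq_sqrt (by norm_num : (0:ℝ) ≤ 5)
  have h3 := Real.sq_sqrt (by norm_num : (0:ℝ) ≤ 3)
  have hsq : (1 - 3*(d:ℝ))^2*5 = ((b:ℝ)+4*(d:ℝ))^2*3 := by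
    linear_combination ((1-3*(d:ℝ))*Real.sqrt 5 + ((b:ℝ)+4*(d:ℝ))*Real.sqrt 3)*hkey
      - (1-3*(d:ℝ))^2*h5 + ((b:ℝ)+4*(d:ℝ))^2*h3
  have hz : (1 - 3*d)^2*5 = (b+4*d)^2*3 := by exact_mod_cast hsq
  have hdvd : (3:ℤ) ∣ (1 - 3*d)^2*5 := ⟨(b+4*d)^2, by linarith⟩
  have hp : Prime (3:ℤ) := Int.prime_three
  have h1 : (3:ℤ) ∣ (1 - 3*d) := by
    rcases hp.dvd_mul.mp hdvd with h | h
    · exact hp.dvd_of_dvd_pow h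
    · norm_num at h
  obtain ⟨k, hk⟩ := h1
  omega

theorem theta_mul_threeOK : ∀ z ∈ threeOK, theta * z ∈ threeOK := by
  intro z hz
  unfold threeOK at hz ⊢
  induction hz using Submodule.span_induction with
  | mem w hw =>
    obtain ⟨x, hxK, hxI, rfl⟩ := hw
    exact Submodule.subset_span ⟨theta*x, Kfield.mul_mem theta_mem_K hxK,
      theta_integral.mul hxI, by ring⟩
  | zero => rw [mul_zero]; exact zero_mem _
  | add u v _ _ hu hv => rw [mul_add]; exact add_mem hu hv
  | smul a u _ hu =>
    rw [Algebra.smul_def, mul_left_comm, ← Algebra.smul_def]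
    exact Submodule.smul_mem _ _ hu

/-- The fractional O-ideal 3·O_K is not invertible: there is no fractional
O-ideal J with (3·O_K)·J = O. -/
theorem threeOK_not_invertible :
    ¬ ∃ J : Submodule OA ℂ, threeOK * J = 1 := by
  rintro ⟨J, hJ⟩
  have hone : (1:ℂ) ∈ threeOK * J := by
    rw [hJ]; exact Submodule.mem_one.mpr ⟨1, map_one _⟩
  have habs : ∀ u ∈ threeOK * J, theta * u ∈ threeOK * J := by
    intro u hu
    refine Submodule.mul_induction_on hu (fun m hm n hn => ?_) (fun x y hx hy => ?_)
    · rw [← mul_assoc]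
      exact Submodule.mul_mem_mul (theta_mul_threeOK m hm) hn
    · rw [mul_add]; exact add_mem hx hy
  have hth : theta ∈ (1 : Submodule OA ℂ) := by
    have := habs 1 hone
    rw [mul_one, hJ] at this
    exact this
  obtain ⟨y, hy⟩ := Submodule.mem_one.mp hth
  have hOA : theta ∈ OA := by
    have : (algebraMap OA ℂ) y = (y : ℂ) := rfl
    rw [this] at hy
    exact hy ▸ y.2
  exact theta_not_mem_M (OA_le_M theta hOA)
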